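/- Let v ∈ B_R, i_max ∈ N, and let v(t) = Ψ_t(v) solve du/dt = -Au - B(u,u) + f. Then for all t ≥ 0 with C_der·t < 1, ‖v(t) - Σ_{i=0}^{i_max} (tⁱ/i!)·Dⁱv‖ ≤ C₀·(C_der·t)^{i_max+1}, where C₀ = R + ‖f‖/‖A‖ and C_der = ‖A‖ + ‖B‖R + (‖B‖/‖A‖)‖f‖. -/

import Mathlib

/-!
Differentiating the equation `n` times, the linear term contributes `‖A‖ ‖Dⁿu‖` and, by the
Leibniz rule, the quadratic term at most `‖B‖ ∑ⱼ (n choose j) ‖Dʲu‖ ‖Dⁿ⁻ʲu‖`. Under the inductive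
bounds `‖Dʲu‖ ≤ C₀ Kʲ j!` with `K = ‖A‖ + ‖B‖ C₀` each of the `n + 1` Leibniz terms is at most
`C₀² Kⁿ n!`, so `‖Dⁿ⁺¹u‖ ≤ C₀ Kⁿ⁺¹ (n + 1)!`; the first derivative needs `‖A‖ R + ‖f‖ = ‖A‖ C₀`
to absorb the forcing. Taylor's theorem with Lagrange remainder `sup ‖Dⁿ⁺¹u‖ tⁿ⁺¹ / (n + 1)!`
then cancels the factorial, leaving `C₀ (K t)ⁿ⁺¹`, and `K` is the paper's `C_der`.
-/

open Finset Set

section Taylor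

variable {E : Type*} [NormedAddCommGroup E] [NormedSpace ℝ E]

theorem hasDerivAt_sum_pow_div_factorial_smul (c : ℕ → E) (n : ℕ) (x : ℝ) :
    HasDerivAt (fun s : ℝ => ∑ i ∈ range (n + 1), (s ^ i / i.factorial) • c i)
      (∑ i ∈ range n, (x ^ i / i.factorial) • c (i + 1)) x := by
  have hterm : ∀ i ∈ range (n + 1), HasDerivAt (fun s : ℝ => (s ^ i / i.factorial) • c i)
      ((i * x ^ (i - 1) / i.factorial) • c i) x :=
    fun i _ => ((hasDerivAt_pow i x).div_const _).smul_const _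
  convert HasDerivAt.fun_sum hterm using 1
  rw [sum_range_succ']
  simp only [Nat.cast_zero, zero_mul, zero_div, zero_smul, add_zero, Nat.add_sub_cancel,
    Nat.factorial_succ, Nat.cast_mul]
  refine sum_congr rfl fun i _ => ?_
  have : (i.factorial : ℝ) ≠ 0 := by positivity
  congr 1
  push_cast
  field_simp

theorem sum_zero_pow_div_factorial_smul (c : ℕ → E) (n : ℕ) :
    ∑ i ∈ range (n + 1), ((0 : ℝ) ^ i / i.factorial) • c i = c 0 := by
  simp [sum_range_succ']

/-- The sharp Lagrange form of the remainder bound; Mathlib's `taylor_mean_remainder_bound`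
only gives the constant `1 / (n - 1)!`. -/
theorem norm_sub_sum_iteratedDeriv_le (n : ℕ) {w : ℝ → E} {L t : ℝ} (hw : ContDiff ℝ n w)
    (ht : 0 ≤ t) (hL : ∀ s ∈ Icc 0 t, ‖iteratedDeriv n w s‖ ≤ L) :
    ‖w t - ∑ i ∈ range n, (t ^ i / i.factorial) • iteratedDeriv i w 0‖ ≤
      L * t ^ n / n.factorial := by
  induction n generalizing w t with
  | zero => simpa using hL t (right_mem_Icc.2 ht)
  | succ n ih =>
    have hdiff : Differentiable ℝ w := hw.differentiable (by simp)
    set g : ℝ → E := fun s =>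
      w s - ∑ i ∈ range (n + 1), (s ^ i / i.factorial) • iteratedDeriv i w 0
    have hg : ∀ x, HasDerivAt g (deriv w x -
        ∑ i ∈ range n, (x ^ i / i.factorial) • iteratedDeriv i (deriv w) 0) x := by
      intro x
      simp_rw [← iteratedDeriv_succ']
      exact (hdiff x).hasDerivAt.sub
        (hasDerivAt_sum_pow_div_factorial_smul (fun i => iteratedDeriv i w 0) n x)
    have hbound : ∀ x : ℝ, HasDerivAt (fun s : ℝ => L * s ^ (n + 1) / (n + 1).factorial)
        (L * x ^ n / n.factorial) x := by
      intro x
      refine (((hasDerivAt_pow (n + 1) x).const_mul L).div_const _).congr_deriv ?_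
      have : (n.factorial : ℝ) ≠ 0 := by positivity
      rw [Nat.factorial_succ, Nat.add_sub_cancel]
      push_cast
      field_simp
    refine image_norm_le_of_norm_deriv_right_le_deriv_boundary
      (fun x _ => (hg x).continuousAt.continuousWithinAt) (fun x _ => (hg x).hasDerivWithinAt)
      (by simp [g, sum_zero_pow_div_factorial_smul]) hbound
      (fun x hx => ih hw.deriv' hx.1 fun s hs => ?_) (right_mem_Icc.2 ht)
    rw [← iteratedDeriv_succ']
    exact hL s ⟨hs.1, hs.2.trans hx.2.le⟩

end Taylor

section IteratedDeriv

variable {E F G : Type*} [NormedAddCommGroup E] [NormedSpace ℝ E] [NormedAddCommGroup F]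
  [NormedSpace ℝ F] [NormedAddCommGroup G] [NormedSpace ℝ G]

theorem ContinuousLinearMap.iteratedDeriv_comp_left (A : E →L[ℝ] F) {u : ℝ → E} {n : ℕ}
    (hu : ContDiff ℝ n u) (s : ℝ) :
    iteratedDeriv n (fun s => A (u s)) s = A (iteratedDeriv n u s) := by
  simp only [iteratedDeriv_eq_iteratedFDeriv]
  rw [show (fun s => A (u s)) = A ∘ u from rfl, A.iteratedFDeriv_comp_left hu.contDiffAt le_rfl]
  rfl

theorem ContinuousLinearMap.norm_iteratedDeriv_le_of_bilinear_of_factorial_bound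
    (B : E →L[ℝ] F →L[ℝ] G) {u : ℝ → E} {w : ℝ → F} {n : ℕ}
    (hu : ContDiff ℝ n u) (hw : ContDiff ℝ n w) (s : ℝ) {C₁ C₂ K : ℝ}
    (hub : ∀ j ≤ n, ‖iteratedDeriv j u s‖ ≤ C₁ * K ^ j * j.factorial)
    (hwb : ∀ j ≤ n, ‖iteratedDeriv j w s‖ ≤ C₂ * K ^ j * j.factorial) :
    ‖iteratedDeriv n (fun s => B (u s) (w s)) s‖ ≤
      ‖B‖ * (C₁ * C₂ * K ^ n * (n + 1).factorial) := by
  rw [← norm_iteratedFDeriv_eq_norm_iteratedDeriv]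
  refine (B.norm_iteratedFDeriv_le_of_bilinear hu hw s le_rfl).trans ?_
  gcongr
  simp_rw [norm_iteratedFDeriv_eq_norm_iteratedDeriv]
  calc ∑ j ∈ range (n + 1), (n.choose j : ℝ) * ‖iteratedDeriv j u s‖ *
        ‖iteratedDeriv (n - j) w s‖
      ≤ ∑ _j ∈ range (n + 1), C₁ * C₂ * K ^ n * n.factorial := by
        refine sum_le_sum fun j hj => ?_
        have hjn : j ≤ n := Nat.lt_succ_iff.1 (mem_range.1 hj)
        have hchoose : (n.choose j : ℝ) * j.factorial * (n - j).factorial = n.factorial := by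
          exact_mod_cast Nat.choose_mul_factorial_mul_factorial hjn
        have hpow : K ^ j * K ^ (n - j) = K ^ n := by rw [← pow_add, Nat.add_sub_cancel' hjn]
        calc (n.choose j : ℝ) * ‖iteratedDeriv j u s‖ * ‖iteratedDeriv (n - j) w s‖
            ≤ n.choose j * (C₁ * K ^ j * j.factorial) *
                (C₂ * K ^ (n - j) * (n - j).factorial) := by
              have := (norm_nonneg _).trans (hub j hjn)
              gcongr
              · exact hub j hjn
              · exact hwb (n - j) (Nat.sub_le n j)
          _ = C₁ * C₂ * (K ^ j * K ^ (n - j)) *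
                (n.choose j * j.factorial * (n - j).factorial) := by ring
          _ = C₁ * C₂ * K ^ n * n.factorial := by rw [hpow, hchoose]
    _ = C₁ * C₂ * K ^ n * (n + 1).factorial := by
        rw [sum_const, card_range, nsmul_eq_mul, Nat.factorial_succ]
        push_cast
        ring

end IteratedDeriv

open scoped ContDiff

section QuadraticODE

variable {E : Type*} [NormedAddCommGroup E] [NormedSpace ℝ E]

theorem contDiff_of_forall_hasDerivAt_comp {F : E → E} (hF : ContDiff ℝ ∞ F) {u : ℝ → E}
    (hu : ∀ t, HasDerivAt u (F (u t)) t) : ContDiff ℝ ∞ u := by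
  have hdiff : Differentiable ℝ u := fun t => (hu t).differentiableAt
  have hderiv : deriv u = F ∘ u := funext fun t => (hu t).deriv
  refine contDiff_infty.2 fun n => ?_
  induction n with
  | zero => exact contDiff_zero.2 hdiff.continuous
  | succ n ih =>
    refine (contDiff_succ_iff_deriv (n := n)).2 ⟨hdiff, by simp, ?_⟩
    rw [hderiv]
    exact (hF.of_le (by exact_mod_cast le_top)).comp ih

variable (A : E →L[ℝ] E) (B : E →L[ℝ] E →L[ℝ] E) (f : E)

theorem contDiff_of_hasDerivAt_quadratic {u : ℝ → E}
    (hu : ∀ t, HasDerivAt u (-A (u t) - B (u t) (u t) + f) t) : ContDiff ℝ ∞ u :=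
  contDiff_of_forall_hasDerivAt_comp (F := fun x => -A x - B x x + f)
    ((A.contDiff.neg.sub (B.contDiff.clm_apply contDiff_id)).add contDiff_const) hu

theorem iteratedDeriv_add_two_of_hasDerivAt_quadratic {u : ℝ → E}
    (hu : ∀ t, HasDerivAt u (-A (u t) - B (u t) (u t) + f) t) (m : ℕ) (s : ℝ) :
    iteratedDeriv (m + 2) u s =
      -A (iteratedDeriv (m + 1) u s) - iteratedDeriv (m + 1) (fun s => B (u s) (u s)) s := by
  have hsmooth := contDiff_infty.1 (contDiff_of_hasDerivAt_quadratic A B f hu) (m + 1)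
  have hderiv : deriv u = fun t => f + (-A (u t) - B (u t) (u t)) :=
    funext fun t => (hu t).deriv.trans (add_comm _ _)
  have hAu : ContDiff ℝ (m + 1 : ℕ) fun t => -A (u t) := (A.contDiff.comp hsmooth).neg
  have hBu : ContDiff ℝ (m + 1 : ℕ) fun t => B (u t) (u t) :=
    (B.contDiff.comp hsmooth).clm_apply hsmooth
  rw [iteratedDeriv_succ', hderiv, iteratedDeriv_const_add (by omega : 0 < m + 1),
    iteratedDeriv_fun_sub hAu.contDiffAt hBu.contDiffAt, iteratedDeriv_fun_neg,
    A.iteratedDeriv_comp_left hsmooth]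

theorem norm_iteratedDeriv_le_of_hasDerivAt_quadratic {u : ℝ → E}
    (hu : ∀ t, HasDerivAt u (-A (u t) - B (u t) (u t) + f) t) {R C : ℝ}
    (huR : ∀ t, ‖u t‖ ≤ R) (hRC : R ≤ C) (hC : ‖A‖ * R + ‖f‖ ≤ ‖A‖ * C) (n : ℕ) (s : ℝ) :
    ‖iteratedDeriv n u s‖ ≤ C * (‖A‖ + ‖B‖ * C) ^ n * n.factorial := by
  have hsmooth := contDiff_infty.1 (contDiff_of_hasDerivAt_quadratic A B f hu)
  have huC : ∀ t, ‖u t‖ ≤ C := fun t => (huR t).trans hRC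
  have hC0 : 0 ≤ C := (norm_nonneg _).trans (huC 0)
  induction n using Nat.strong_induction_on generalizing s with
  | _ n ih =>
  match n with
  | 0 => simpa using huC s
  | 1 =>
    have hAu : ‖A (u s)‖ ≤ ‖A‖ * R := (A.le_opNorm _).trans (by gcongr; exact huR s)
    have hBu : ‖B (u s) (u s)‖ ≤ ‖B‖ * C * C :=
      (B.le_opNorm₂ _ _).trans (by gcongr <;> exact huC s)
    rw [iteratedDeriv_one, (hu s).deriv]
    calc ‖-A (u s) - B (u s) (u s) + f‖ ≤ ‖A (u s)‖ + ‖B (u s) (u s)‖ + ‖f‖ := by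
          refine (norm_add_le _ _).trans ?_
          gcongr
          exact (norm_sub_le _ _).trans_eq (by rw [norm_neg])
      _ ≤ C * (‖A‖ + ‖B‖ * C) ^ 1 * (1 : ℕ).factorial := by
          simp only [pow_one, Nat.factorial_one, Nat.cast_one, mul_one]
          linarith
  | m + 2 =>
    set K := ‖A‖ + ‖B‖ * C
    have hlin := ih (m + 1) (by omega) s
    have hquad := B.norm_iteratedDeriv_le_of_bilinear_of_factorial_bound (hsmooth (m + 1))
      (hsmooth (m + 1)) s (fun j hj => ih j (by omega) s) (fun j hj => ih j (by omega) s)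
    have hfact : ((m + 1).factorial : ℝ) ≤ (m + 2).factorial := by
      exact_mod_cast Nat.factorial_le (by omega)
    rw [iteratedDeriv_add_two_of_hasDerivAt_quadratic A B f hu]
    calc ‖-A (iteratedDeriv (m + 1) u s) - iteratedDeriv (m + 1) (fun s => B (u s) (u s)) s‖
        ≤ ‖A‖ * ‖iteratedDeriv (m + 1) u s‖ +
            ‖iteratedDeriv (m + 1) (fun s => B (u s) (u s)) s‖ := by
          refine (norm_sub_le _ _).trans ?_
          rw [norm_neg]
          gcongr
          exact A.le_opNorm _
      _ ≤ ‖A‖ * (C * K ^ (m + 1) * (m + 1).factorial) +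
            ‖B‖ * (C * C * K ^ (m + 1) * (m + 1 + 1).factorial) := by gcongr
      _ ≤ ‖A‖ * (C * K ^ (m + 1) * (m + 2).factorial) +
            ‖B‖ * (C * C * K ^ (m + 1) * (m + 2).factorial) := by gcongr
      _ = C * K ^ (m + 2) * (m + 2).factorial := by ring

end QuadraticODE

theorem taylor_truncation_bound_flow_general
    (d : ℕ)
    (A : EuclideanSpace ℝ (Fin d) →L[ℝ] EuclideanSpace ℝ (Fin d))
    (B : EuclideanSpace ℝ (Fin d) →L[ℝ]
      EuclideanSpace ℝ (Fin d) →L[ℝ] EuclideanSpace ℝ (Fin d))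
    (f : EuclideanSpace ℝ (Fin d))
    (R : ℝ) (hA : A ≠ 0)
    (u : ℝ → EuclideanSpace ℝ (Fin d))
    (hu : ∀ t : ℝ, HasDerivAt u (-A (u t) - B (u t) (u t) + f) t)
    (huR : ∀ t : ℝ, ‖u t‖ ≤ R)
    (imax : ℕ) (t : ℝ) (ht0 : 0 ≤ t) :
    ‖u t - ∑ i ∈ Finset.range (imax + 1),
        (t ^ i / (i.factorial : ℝ)) • iteratedDeriv i u 0‖ ≤
      (R + ‖f‖ / ‖A‖) *
        ((‖A‖ + ‖B‖ * R + (‖B‖ / ‖A‖) * ‖f‖) * t) ^ (imax + 1) := by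
  have hA0 : 0 < ‖A‖ := norm_pos_iff.2 hA
  set C₀ := R + ‖f‖ / ‖A‖
  have hRC : R ≤ C₀ := le_add_of_nonneg_right (by positivity)
  have hC : ‖A‖ * R + ‖f‖ ≤ ‖A‖ * C₀ := by rw [mul_add, mul_div_cancel₀ _ hA0.ne']
  have hCder : ‖A‖ + ‖B‖ * R + (‖B‖ / ‖A‖) * ‖f‖ = ‖A‖ + ‖B‖ * C₀ := by ring
  have hsmooth := contDiff_infty.1 (contDiff_of_hasDerivAt_quadratic A B f hu)
  calc _ ≤ C₀ * (‖A‖ + ‖B‖ * C₀) ^ (imax + 1) * (imax + 1).factorial * t ^ (imax + 1) /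
          (imax + 1).factorial :=
        norm_sub_sum_iteratedDeriv_le (imax + 1) (hsmooth _) ht0 fun s _ =>
          norm_iteratedDeriv_le_of_hasDerivAt_quadratic A B f hu huR hRC hC _ s
    _ = _ := by
        rw [hCder, mul_pow]
        field_simp

/-- Taylor truncation bound for the flow: with `C₀ = R + ‖f‖/‖A‖` and
`C_der = ‖A‖ + ‖B‖R + (‖B‖/‖A‖)‖f‖`, the solution `u` of
`du/dt = -Au - B(u,u) + f` started at `v ∈ B_R` satisfies, for `0 ≤ t` with
`C_der·t < 1`,
`‖u(t) - ∑_{i=0}^{i_max} (tⁱ/i!)·Dⁱv‖ ≤ C₀·(C_der·t)^{i_max+1}`. -/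
theorem taylor_truncation_bound_flow
    (d : ℕ)
    (A : EuclideanSpace ℝ (Fin d) →L[ℝ] EuclideanSpace ℝ (Fin d))
    (B : EuclideanSpace ℝ (Fin d) →L[ℝ]
      EuclideanSpace ℝ (Fin d) →L[ℝ] EuclideanSpace ℝ (Fin d))
    (f : EuclideanSpace ℝ (Fin d))
    (R : ℝ) (hR : 0 < R) (hA : A ≠ 0)
    (u : ℝ → EuclideanSpace ℝ (Fin d)) (v : EuclideanSpace ℝ (Fin d))
    (hu0 : u 0 = v) (hvR : ‖v‖ ≤ R)
    (hu : ∀ t : ℝ, HasDerivAt u (-A (u t) - B (u t) (u t) + f) t)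
    (huR : ∀ t : ℝ, ‖u t‖ ≤ R)
    (imax : ℕ) (t : ℝ) (ht0 : 0 ≤ t)
    (ht1 : (‖A‖ + ‖B‖ * R + (‖B‖ / ‖A‖) * ‖f‖) * t < 1) :
    ‖u t - ∑ i ∈ Finset.range (imax + 1),
        (t ^ i / (i.factorial : ℝ)) • iteratedDeriv i u 0‖ ≤
      (R + ‖f‖ / ‖A‖) *
        ((‖A‖ + ‖B‖ * R + (‖B‖ / ‖A‖) * ‖f‖) * t) ^ (imax + 1) :=
  taylor_truncation_bound_flow_general d A B f R hA u hu huR imax t ht0
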